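/- Let (G,·) be an abelian group and (G,f) = der^n(G,·), i.e., f(x₁,...,xₙ) = x₁·x₂···xₙ. Then Aut(G,f) ≅ Aut(G,·) ⋉ Z̄(G), where Z̄(G) = {a ∈ G : a^(n-1) = 1} and Aut(G,·) acts on Z̄(G) naturally. -/

import Mathlib

/-- The automorphism group of an `n`-ary groupoid `(G,f)`. -/
def nAryAut {G : Type*} (n : ℕ) (f : (Fin n → G) → G) [DecidableEq G] :
    Subgroup (Equiv.Perm G) where
  carrier := {ψ | ∀ x : Fin n → G, ψ (f x) = f (fun i => ψ (x i))}
  one_mem' := by intro x; simp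
  mul_mem' := by
    intro ψ χ hψ hχ x
    simp only [Equiv.Perm.mul_apply, Set.mem_setOf_eq] at *
    rw [hχ, hψ]
  inv_mem' := by
    intro ψ hψ x
    apply ψ.injective
    rw [Equiv.Perm.coe_inv, Equiv.apply_symm_apply, hψ]
    congr 1
    funext i
    rw [Equiv.apply_symm_apply]

/-!
Every automorphism `φ` of `(G,·)` and every `a` with `a ^ (n-1) = 1` give the automorphism
`x ↦ a * φ x` of `x₁ ⋯ xₙ`. Conversely, for an automorphism `ψ` of the `n`-ary product, feeding
`(1, …, 1)` shows `ψ 1 ^ (n-1) = 1`, and feeding `(x, y, 1, …, 1)` (this needs `n ≥ 2`) shows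
that `x ↦ (ψ 1)⁻¹ * ψ x` is multiplicative. Composition of such affine maps is exactly the
multiplication of `Z̄(G) ⋊ Aut(G,·)`.
-/

section Affine

variable {G : Type*} [Group G]

def affinePerm (a : G) (φ : MulAut G) : Equiv.Perm G :=
  φ.toEquiv.trans (Equiv.mulLeft a)

@[simp]
theorem affinePerm_apply (a : G) (φ : MulAut G) (x : G) : affinePerm a φ x = a * φ x := rfl

theorem affinePerm_mul (a b : G) (φ χ : MulAut G) :
    affinePerm a φ * affinePerm b χ = affinePerm (a * φ b) (φ * χ) := by
  ext x
  simp [mul_assoc]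

end Affine

section DerivedProduct

variable {G : Type*} [CommGroup G] [DecidableEq G]

theorem mem_nAryAut_ofFn_prod_iff {n : ℕ} (ψ : Equiv.Perm G) :
    ψ ∈ nAryAut n (fun x : Fin n → G => (List.ofFn x).prod) ↔
      ∀ x : Fin n → G, ψ (∏ i, x i) = ∏ i, ψ (x i) := by
  simp only [List.prod_ofFn]
  rfl

theorem affinePerm_mem_nAryAut {k : ℕ} {a : G} (ha : a ^ k = 1) (φ : MulAut G) :
    affinePerm a φ ∈ nAryAut (k + 1) (fun x : Fin (k + 1) → G => (List.ofFn x).prod) := by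
  rw [mem_nAryAut_ofFn_prod_iff]
  intro x
  simp [map_prod, Finset.prod_mul_distrib, pow_succ, ha]

variable {k : ℕ} {ψ : Equiv.Perm G}

theorem apply_one_pow_eq_one_of_mem_nAryAut
    (hψ : ψ ∈ nAryAut (k + 1) (fun x : Fin (k + 1) → G => (List.ofFn x).prod)) :
    ψ 1 ^ k = 1 := by
  have h := (mem_nAryAut_ofFn_prod_iff ψ).mp hψ (fun _ => 1)
  simp only [Finset.prod_const_one, Finset.prod_const, Finset.card_univ, Fintype.card_fin,
    pow_succ] at h
  exact mul_eq_right.mp h.symm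

theorem apply_mul_mul_apply_one_of_mem_nAryAut
    (hψ : ψ ∈ nAryAut (k + 2) (fun x : Fin (k + 2) → G => (List.ofFn x).prod)) (x y : G) :
    ψ (x * y) * ψ 1 = ψ x * ψ y := by
  have h := hψ (Fin.cons x (Fin.cons y fun _ => 1))
  simp only [List.ofFn_succ, Fin.cons_zero, Fin.cons_succ, List.ofFn_const, List.prod_cons,
    List.prod_replicate, one_pow, mul_one] at h
  rw [h, mul_assoc, mul_assoc, ← pow_succ, apply_one_pow_eq_one_of_mem_nAryAut hψ, mul_one]

def mulAutOfMemNAryAut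
    (hψ : ψ ∈ nAryAut (k + 2) (fun x : Fin (k + 2) → G => (List.ofFn x).prod)) : MulAut G where
  toFun x := (ψ 1)⁻¹ * ψ x
  invFun y := ψ.symm (ψ 1 * y)
  left_inv x := by simp
  right_inv y := by simp
  map_mul' x y := by
    rw [eq_mul_inv_of_mul_eq (apply_mul_mul_apply_one_of_mem_nAryAut hψ x y)]
    simp only [mul_assoc, mul_left_comm _ (ψ 1)⁻¹, mul_comm (ψ y)]

@[simp]
theorem mulAutOfMemNAryAut_apply
    (hψ : ψ ∈ nAryAut (k + 2) (fun x : Fin (k + 2) → G => (List.ofFn x).prod)) (x : G) :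
    mulAutOfMemNAryAut hψ x = (ψ 1)⁻¹ * ψ x := rfl

theorem affinePerm_mulAutOfMemNAryAut
    (hψ : ψ ∈ nAryAut (k + 2) (fun x : Fin (k + 2) → G => (List.ofFn x).prod)) :
    affinePerm (ψ 1) (mulAutOfMemNAryAut hψ) = ψ := by
  ext x
  simp

end DerivedProduct

section Semidirect

variable {G : Type*} [CommGroup G] [DecidableEq G]

instance characteristic_ker_powMonoidHom (k : ℕ) :
    (powMonoidHom k : G →* G).ker.Characteristic :=
  Subgroup.characteristic_iff_le_comap.mpr fun φ a ha => by
    simp_all [MonoidHom.mem_ker, ← map_pow]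

def kerPowSemidirectEquivNAryAut (k : ℕ) :
    (powMonoidHom (k + 1) : G →* G).ker ⋊[MulAut.characteristic _] MulAut G ≃*
      nAryAut (k + 2) (fun x : Fin (k + 2) → G => (List.ofFn x).prod) where
  toFun p := ⟨affinePerm p.left p.right, affinePerm_mem_nAryAut p.left.2 p.right⟩
  invFun ψ :=
    ⟨⟨ψ.1 1, apply_one_pow_eq_one_of_mem_nAryAut ψ.2⟩, mulAutOfMemNAryAut ψ.2⟩
  left_inv p := by ext <;> simp
  right_inv ψ := Subtype.ext (affinePerm_mulAutOfMemNAryAut ψ.2)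
  map_mul' p q := Subtype.ext (affinePerm_mul _ _ _ _).symm

end Semidirect

theorem aut_of_derived_abelian {G : Type*} [CommGroup G] [DecidableEq G]
    (n : ℕ) (hn : 2 ≤ n) :
    ∃ S : Subgroup G,
      (∀ a : G, a ∈ S ↔ a ^ (n - 1) = 1) ∧
      ∃ act : MulAut G →* MulAut S,
        (∀ (φ : MulAut G) (a : S), ((act φ a : G)) = φ (a : G)) ∧
        Nonempty ((S ⋊[act] MulAut G)
          ≃* nAryAut n (fun x : Fin n → G => (List.ofFn x).prod)) := by
  obtain ⟨k, rfl⟩ : ∃ k, n = k + 2 := ⟨n - 2, by omega⟩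
  exact ⟨_, fun a => by simp [MonoidHom.mem_ker], MulAut.characteristic _, fun _ _ => rfl,
    ⟨kerPowSemidirectEquivNAryAut k⟩⟩
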